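/- arXiv:1611.08739 — 6 statements merged into one kernel-verified Lean document; each statement's English description precedes it below -/
import Mathlib

section
/- Let A be a group of automorphisms of a finite group G with gcd(|A|,|G|) = 1. Then [[G,A],A] = [G,A]. -/
/-!
Write `K = [[G,A],A]`. If `g * h` is a point of the coset `g [G,A]` fixed by `a`, then
`g⁻¹ (a • g) = h (a • h)⁻¹ ∈ K`. The elements `a` with `g⁻¹ (a • g) ∈ K` for every `g` form a
subgroup of `A`, so it suffices that it contains a Sylow `p`-subgroup `P` of `A` for each
`p ∣ |A|`. Such a `P` permutes every coset `g [G,A]`, whose size is prime to `p` by coprimality,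
and a `p`-group acting on a set of size prime to `p` has a fixed point.
-/

open Subgroup
open scoped Pointwise

section

variable {A G : Type*} [Group A] [Group G]

theorem Subgroup.eq_top_of_forall_sylow_le [Finite A] {H : Subgroup A}
    (hH : ∀ p, p.Prime → p ∣ Nat.card A → ∃ P : Sylow p A, ↑P ≤ H) : H = ⊤ := by
  refine index_eq_one.mp (Nat.eq_one_iff_not_exists_prime_dvd.mpr fun p hp hpH => ?_)
  have : Fact p.Prime := ⟨hp⟩
  obtain ⟨P, hPH⟩ := hH p hp (hpH.trans H.index_dvd_card)
  exact P.not_dvd_index (hpH.trans (index_dvd_of_le hPH))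

variable [MulDistribMulAction A G]

variable (A) in
def Subgroup.smulCommutator (H : Subgroup G) : Subgroup G :=
  closure {y | ∃ h ∈ H, ∃ a : A, y = h⁻¹ * (a • h)}

theorem Subgroup.inv_mul_smul_mem_smulCommutator {H : Subgroup G} {h : G} (hh : h ∈ H) (a : A) :
    h⁻¹ * (a • h) ∈ H.smulCommutator A :=
  subset_closure ⟨h, hh, a, rfl⟩

theorem Subgroup.smul_mem_of_forall_inv_mul_smul_mem {H : Subgroup G} {a : A}
    (ha : ∀ g : G, g⁻¹ * (a • g) ∈ H) {h : G} (hh : h ∈ H) : a • h ∈ H := by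
  simpa using H.mul_mem hh (ha h)

variable (A) in
/-- When `K` is `A`-invariant, this is the kernel of the action of `A` on `G ⧸ K`. -/
def Subgroup.leftCosetFixingSubgroup (K : Subgroup G) : Subgroup A where
  carrier := {a | ∀ g : G, g⁻¹ * (a • g) ∈ K}
  one_mem' g := by simp
  mul_mem' {a b} ha hb g := by
    have key : g⁻¹ * ((a * b) • g) = (g⁻¹ * (b • g)) * ((b • g)⁻¹ * (a • b • g)) := by
      rw [mul_smul]; group
    exact key ▸ K.mul_mem (hb g) (ha _)
  inv_mem' {a} ha g := by
    have key : g⁻¹ * (a⁻¹ • g) = ((a⁻¹ • g)⁻¹ * (a • a⁻¹ • g))⁻¹ := by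
      rw [smul_inv_smul]; group
    exact key ▸ K.inv_mem (ha _)

theorem IsPGroup.exists_forall_inv_mul_smul_eq {P : Type*} [Group P] [MulDistribMulAction P G]
    {p : ℕ} [Fact p.Prime] (hP : IsPGroup p P) {H : Subgroup G} (hpH : ¬ p ∣ Nat.card H)
    (hH : ∀ (a : P) (g : G), g⁻¹ * (a • g) ∈ H) (g : G) :
    ∃ h ∈ H, ∀ a : P, g⁻¹ * (a • g) = h⁻¹ * (a • h) := by
  let coset : SubMulAction P G :=
    { carrier := g • (H : Set G)
      smul_mem' a x hx := by
        rw [mem_leftCoset_iff] at hx ⊢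
        have key : g⁻¹ * (a • x) = (g⁻¹ * (a • g)) * (a • (g⁻¹ * x)) := by
          rw [smul_mul', smul_inv']; group
        exact key ▸ H.mul_mem (hH a g) (smul_mem_of_forall_inv_mul_smul_mem (hH a) hx) }
  have hcard : Nat.card coset = Nat.card H := Set.natCard_smul_set g (H : Set G)
  obtain ⟨⟨x, hx⟩, hfix⟩ := hP.nonempty_fixed_point_of_prime_not_dvd_card coset (hcard ▸ hpH)
  obtain ⟨k, hk, rfl⟩ := hx
  refine ⟨k⁻¹, H.inv_mem hk, fun a => ?_⟩
  have hgk : a • (g * k) = g * k := congrArg Subtype.val (hfix a)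
  rw [smul_mul'] at hgk
  rw [smul_inv', inv_inv, eq_mul_inv_iff_mul_eq, mul_assoc, hgk, inv_mul_cancel_left]

theorem Subgroup.smulCommutator_smulCommutator_top [Finite A] [Finite G]
    (hcop : (Nat.card A).Coprime (Nat.card G)) :
    ((⊤ : Subgroup G).smulCommutator A).smulCommutator A = (⊤ : Subgroup G).smulCommutator A := by
  set H := (⊤ : Subgroup G).smulCommutator A
  refine le_antisymm (closure_mono ?_) ((closure_le _).mpr ?_)
  · rintro _ ⟨h, -, a, rfl⟩
    exact ⟨h, mem_top h, a, rfl⟩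
  have hfix : (H.smulCommutator A).leftCosetFixingSubgroup A = ⊤ := by
    refine eq_top_of_forall_sylow_le fun p hp hpA => ?_
    have : Fact p.Prime := ⟨hp⟩
    have hpH : ¬ p ∣ Nat.card H := fun hpH => hp.one_lt.ne' <|
      Nat.eq_one_of_dvd_coprimes hcop hpA (hpH.trans (card_subgroup_dvd_card H))
    obtain ⟨P⟩ := Sylow.nonempty (p := p) (G := A)
    refine ⟨P, fun a ha g => ?_⟩
    obtain ⟨h, hh, heq⟩ := P.isPGroup'.exists_forall_inv_mul_smul_eq hpH
      (fun a g => inv_mul_smul_mem_smulCommutator (mem_top g) (a : A)) g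
    exact heq ⟨a, ha⟩ ▸ inv_mul_smul_mem_smulCommutator hh a
  rintro _ ⟨g, -, a, rfl⟩
  exact (hfix ▸ mem_top a : a ∈ (H.smulCommutator A).leftCosetFixingSubgroup A) g

end

section

variable {G : Type*} [Group G]

theorem Subgroup.smulCommutator_eq_closure (A : Subgroup (MulAut G)) (H : Subgroup G) :
    H.smulCommutator A = closure {y | ∃ h ∈ H, ∃ α ∈ A, y = h⁻¹ * α h} := by
  simp [smulCommutator, Subtype.exists]

theorem Subgroup.top_smulCommutator_eq_closure (A : Subgroup (MulAut G)) :
    (⊤ : Subgroup G).smulCommutator A = closure {y | ∃ g : G, ∃ α ∈ A, y = g⁻¹ * α g} := by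
  simp [smulCommutator_eq_closure]

end

/-- Coprime action on a finite group: `[[G,A],A] = [G,A]`, where `[G,A]` is the
subgroup generated by the elements `g⁻¹ * α g` for `g ∈ G`, `α ∈ A`. -/
theorem stmt_5 {G : Type*} [Group G] [Finite G] (A : Subgroup (MulAut G))
    (hcop : Nat.Coprime (Nat.card A) (Nat.card G)) :
    Subgroup.closure {y : G |
        ∃ h ∈ Subgroup.closure {y : G | ∃ g : G, ∃ α ∈ A, y = g⁻¹ * α g},
          ∃ α ∈ A, y = h⁻¹ * α h}
      = Subgroup.closure {y : G | ∃ g : G, ∃ α ∈ A, y = g⁻¹ * α g} := by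
  rw [← top_smulCommutator_eq_closure, ← smulCommutator_eq_closure]
  exact smulCommutator_smulCommutator_top hcop
end

section
/- Let G be a finite group admitting an automorphism α with gcd(ord(α),|G|) = 1 such that G' ≤ C_G(α). Then C_G(α) commutes elementwise with [G,α], i.e. [C_G(α), [G,α]] = 1. -/
/-!
For a fixed point `c` of `α` we have `α ⁅c, g⁆ = ⁅c, α g⁆`, so if `α` fixes `⁅c, g⁆`
then `⁅c, α g⁆ = ⁅c, g⁆`, which says exactly that `c` commutes with `g⁻¹ * α g`.
The generators of `[G, α]` therefore lie in the centralizer of `c`, and hence so does `[G, α]`.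
-/

open scoped commutatorElement

theorem commute_inv_mul_of_commutatorElement_eq {G : Type*} [Group G] {c g a : G}
    (h : ⁅c, a⁆ = ⁅c, g⁆) : Commute c (g⁻¹ * a) := by
  rw [commutatorElement_def, commutatorElement_def] at h
  have h' : a * c⁻¹ * a⁻¹ = g * c⁻¹ * g⁻¹ := by
    simpa only [mul_assoc, mul_right_inj] using h
  calc c * (g⁻¹ * a) = g⁻¹ * (g * c⁻¹ * g⁻¹)⁻¹ * a := by group
    _ = g⁻¹ * (a * c⁻¹ * a⁻¹)⁻¹ * a := by rw [h']
    _ = g⁻¹ * a * c := by group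

theorem commute_inv_mul_apply_of_apply_commutatorElement_eq {G F : Type*} [Group G]
    [FunLike F G G] [MonoidHomClass F G G] (f : F) {c g : G} (hc : f c = c)
    (hcg : f ⁅c, g⁆ = ⁅c, g⁆) : Commute c (g⁻¹ * f g) :=
  commute_inv_mul_of_commutatorElement_eq (by rwa [map_commutatorElement, hc] at hcg)

theorem closure_inv_mul_apply_le_centralizer {G F : Type*} [Group G]
    [FunLike F G G] [MonoidHomClass F G G] (f : F) {c : G} (hc : f c = c)
    (hcomm : ∀ x ∈ commutator G, f x = x) :
    Subgroup.closure {y : G | ∃ g : G, y = g⁻¹ * f g} ≤ Subgroup.centralizer {c} := by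
  rw [Subgroup.closure_le]
  rintro _ ⟨g, rfl⟩
  rw [SetLike.mem_coe, Subgroup.mem_centralizer_singleton_iff]
  have hfix : f ⁅c, g⁆ = ⁅c, g⁆ :=
    hcomm _ (Subgroup.commutator_mem_commutator (Subgroup.mem_top c) (Subgroup.mem_top g))
  exact (commute_inv_mul_apply_of_apply_commutatorElement_eq f hc hfix).eq.symm

theorem stmt_6_general {G : Type*} [Group G] (α : MulAut G)
    (hG' : ∀ x ∈ commutator G, α x = x) :
    ∀ c : G, α c = c →
      ∀ x ∈ Subgroup.closure {y : G | ∃ g : G, y = g⁻¹ * α g}, Commute c x :=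
  fun _ hc _ hx =>
    (Subgroup.mem_centralizer_singleton_iff.mp
      (closure_inv_mul_apply_le_centralizer α hc hG' hx)).symm

/-- If a finite group `G` admits an automorphism `α` of order coprime to `|G|` with
`G' ≤ C_G(α)`, then every fixed point of `α` commutes with every element of `[G,α]`. -/
theorem stmt_6 {G : Type*} [Group G] [Finite G] (α : MulAut G)
    (hcop : Nat.Coprime (orderOf α) (Nat.card G))
    (hG' : ∀ x ∈ commutator G, α x = x) :
    ∀ c : G, α c = c →
      ∀ x ∈ Subgroup.closure {y : G | ∃ g : G, y = g⁻¹ * α g}, Commute c x :=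
  stmt_6_general α hG'
end

section
/- Let G be a finite group admitting a coprime automorphism α such that G' ≤ C_G(α), and let Z = Z([G,α]) be the center of [G,α]. Then [Z,α] ≤ Z(G). -/
/-!
Write `φ y = y⁻¹ * α y`. Since `α` fixes `G'`, it fixes every conjugate of a fixed point, so each
fixed point commutes with each `φ y`. Coprimality gives `φ x = 1` whenever `α` fixes `φ x`; together
these make `y ↦ φ y` induce an injective, hence bijective, self-map of the right cosets of `C_G(α)`,
so `G = C_G(α) · {φ y}`. If `z` centralizes `[G,α]`, then `z⁻¹ * α z` commutes with every `φ y`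
(as `z` and `α z` do) and with every fixed point, hence with all of `G`.
-/

namespace MulAut

variable {G : Type*} [Group G] (α : MulAut G)

open scoped commutatorElement in
theorem conj_apply_eq_self_of_commutator (hG' : ∀ x ∈ commutator G, α x = x) {c : G}
    (hc : α c = c) (x : G) : α (x * c * x⁻¹) = x * c * x⁻¹ := by
  have h := hG' ⁅x, c⁆ (Subgroup.commutator_mem_commutator trivial trivial)
  rw [commutatorElement_def] at h
  calc α (x * c * x⁻¹) = α (x * c * x⁻¹ * c⁻¹) * c := by simp [hc]
    _ = x * c * x⁻¹ := by rw [h, inv_mul_cancel_right]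

theorem commute_inv_mul_apply_of_commutator (hG' : ∀ x ∈ commutator G, α x = x) {c : G}
    (hc : α c = c) (g : G) : Commute c (g⁻¹ * α g) := by
  have h := conj_apply_eq_self_of_commutator α hG' hc g
  simp only [map_mul, map_inv, hc] at h
  calc c * (g⁻¹ * α g) = g⁻¹ * (α g * c * (α g)⁻¹) * α g := by rw [h]; group
    _ = g⁻¹ * α g * c := by group

theorem inv_mul_apply_eq_one [Finite G] (hcop : (orderOf α).Coprime (Nat.card G)) {g : G}
    (h : α (g⁻¹ * α g) = g⁻¹ * α g) : g⁻¹ * α g = 1 := by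
  set u := g⁻¹ * α g
  have hpow : ∀ n : ℕ, (α ^ n) g = g * u ^ n := by
    intro n
    induction n with
    | zero => simp
    | succ n ih =>
      rw [pow_succ', mul_apply, ih, map_mul, map_pow, h, pow_succ', ← mul_assoc,
        mul_inv_cancel_left]
  have hu : u ^ orderOf α = 1 := by
    simpa [pow_orderOf_eq_one] using (hpow (orderOf α)).symm
  exact orderOf_eq_one_iff.mp <| Nat.eq_one_of_dvd_coprimes hcop
    (orderOf_dvd_of_pow_eq_one hu) (orderOf_dvd_natCard u)

theorem inv_mul_apply_eq_iff {y y' : G} :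
    y'⁻¹ * α y' = y⁻¹ * α y ↔ α (y' * y⁻¹) = y' * y⁻¹ := by
  rw [map_mul, map_inv, mul_inv_eq_iff_eq_mul, mul_assoc, ← inv_mul_eq_iff_eq_mul (a := y')]

theorem exists_eq_mul_inv_mul_apply [Finite G] (hcop : (orderOf α).Coprime (Nat.card G))
    (hG' : ∀ x ∈ commutator G, α x = x) (g : G) :
    ∃ c y : G, α c = c ∧ g = c * (y⁻¹ * α y) := by
  let C : Subgroup G := (α : G →* G).eqLocus (MonoidHom.id G)
  have hmemC {k : G} : k ∈ C ↔ α k = k := Iff.rfl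
  let φ : G → G := fun y ↦ y⁻¹ * α y
  let Φ : Quotient (QuotientGroup.rightRel C) → Quotient (QuotientGroup.rightRel C) :=
    Quotient.map' φ fun y y' h ↦ by
      rw [QuotientGroup.rightRel_apply, hmemC] at *
      rw [show φ y' = φ y from (inv_mul_apply_eq_iff α).mpr h, mul_inv_cancel, map_one]
  have hΦ : Function.Injective Φ := by
    rintro ⟨y⟩ ⟨y'⟩ h
    have hk : α (φ y' * (φ y)⁻¹) = φ y' * (φ y)⁻¹ :=
      QuotientGroup.rightRel_apply.mp (Quotient.exact' h)
    refine Quotient.sound' (QuotientGroup.rightRel_apply.mpr ?_)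
    have hconj : φ (y' * y⁻¹) = y * (φ y' * (φ y)⁻¹) * y⁻¹ := by
      simp only [φ, map_mul, map_inv]; group
    have hfix := conj_apply_eq_self_of_commutator α hG' hk y
    rw [← hconj] at hfix
    exact (inv_mul_eq_one.mp (inv_mul_apply_eq_one α hcop hfix)).symm
  obtain ⟨⟨y⟩, hy⟩ := Finite.injective_iff_surjective.mp hΦ ⟦g⟧
  have : g * (φ y)⁻¹ ∈ C := QuotientGroup.rightRel_apply.mp (Quotient.exact' hy)
  exact ⟨g * (φ y)⁻¹, y, this, (inv_mul_cancel_right g _).symm⟩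

end MulAut

/-- If a finite group `G` admits a coprime automorphism `α` with `G' ≤ C_G(α)`, and
`Z` is the center of `[G,α]` (elements of `[G,α]` commuting with all of `[G,α]`),
then `[Z,α] ≤ Z(G)`. -/
theorem stmt_7 {G : Type*} [Group G] [Finite G] (α : MulAut G)
    (hcop : Nat.Coprime (orderOf α) (Nat.card G))
    (hG' : ∀ x ∈ commutator G, α x = x) :
    Subgroup.closure {y : G |
        ∃ z ∈ Subgroup.closure {w : G | ∃ g : G, w = g⁻¹ * α g},
          (∀ x ∈ Subgroup.closure {w : G | ∃ g : G, w = g⁻¹ * α g}, Commute z x) ∧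
            y = z⁻¹ * α z}
      ≤ Subgroup.center G := by
  rw [Subgroup.closure_le]
  rintro _ ⟨z, -, hz, rfl⟩
  refine Subgroup.mem_center_iff.mpr fun g ↦ ?_
  obtain ⟨c, y, hc, rfl⟩ := α.exists_eq_mul_inv_mul_apply hcop hG' g
  have hgen (x : G) : x⁻¹ * α x ∈ Subgroup.closure {w : G | ∃ g : G, w = g⁻¹ * α g} :=
    Subgroup.subset_closure ⟨x, rfl⟩
  have hzy : Commute z (y⁻¹ * α y) := hz _ (hgen y)
  have hαzy : Commute (α z) (y⁻¹ * α y) := by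
    -- `α⁻¹ (y⁻¹ * α y)` is the generator `(α⁻¹ y)⁻¹ * y`
    simpa using (hz _ (hgen (α.symm y))).map (α : G →* G)
  have hc' : Commute c (z⁻¹ * α z) := α.commute_inv_mul_apply_of_commutator hG' hc z
  exact (hc'.mul_left (hzy.inv_left.mul_left hαzy).symm).eq
end

section
/- Let G = G₁ ⊕ G₂ ⊕ ⋯ ⊕ G_m be a finite abelian group written as a direct sum of m mutually isomorphic subgroups G_i, admitting an automorphism α of order m with gcd(m,|G|) = 1 that cyclically permutes the summands (G_i^α = G_{i+1 mod m}). Then the index [G : [G,α]] equals |G₁|. -/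
/-!
The index of the range of `α - 1` equals the order of its kernel, the subgroup of fixed points of
`α`. Writing a fixed point as `g = ∑ cᵢ` with `cᵢ ∈ Gᵢ` and comparing with `α g = ∑ α cᵢ`, where
`α cᵢ ∈ Gᵢ₊₁`, uniqueness of the decomposition forces `cᵢ = αⁱ c₀`. Hence the orbit sum
`x ↦ x + α x + ⋯ + α^{m-1} x` is a bijection from `G₀` onto the fixed points.
-/

open Finset

section Decomposition

variable {G ι : Type*} [AddCommGroup G] [Fintype ι] {p : ι → AddSubgroup G}

theorem AddSubgroup.exists_sum_eq_of_mem_iSup [DecidableEq ι] {x : G} (hx : x ∈ ⨆ i, p i) :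
    ∃ v : ι → G, (∀ i, v i ∈ p i) ∧ ∑ i, v i = x := by
  refine AddSubgroup.iSup_induction p (C := fun x => ∃ v : ι → G, (∀ i, v i ∈ p i) ∧ ∑ i, v i = x)
    hx (fun i x hx => ⟨Pi.single i x, fun j => ?_, by simp⟩) ⟨0, fun _ => zero_mem _, by simp⟩ ?_
  · obtain rfl | hji := eq_or_ne j i
    · simpa using hx
    · simp [hji]
  · rintro _ _ ⟨v, hv, rfl⟩ ⟨w, hw, rfl⟩
    exact ⟨v + w, fun i => add_mem (hv i) (hw i), by simp [sum_add_distrib]⟩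

theorem iSupIndep.eq_of_sum_eq_sum (h : iSupIndep p) {v w : ι → G} (hv : ∀ i, v i ∈ p i)
    (hw : ∀ i, w i ∈ p i) (hvw : ∑ i, v i = ∑ i, w i) : v = w := by
  rw [← iSupIndep_map_orderIso_iff AddSubgroup.toIntSubmodule,
    iSupIndep_iff_finsetSum_eq_imp_eq] at h
  exact funext fun i => h univ v w (fun i _ => ⟨hv i, hw i⟩) hvw i (mem_univ i)

end Decomposition

theorem Fin.induction_add_one {m : ℕ} [NeZero m] {P : Fin m → Prop} (zero : P 0)
    (succ : ∀ i : Fin m, (i : ℕ) + 1 < m → P i → P (i + 1)) (i : Fin m) : P i := by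
  obtain ⟨n, hn⟩ := i
  induction n with
  | zero => exact zero
  | succ n ih =>
    have hsucc : (⟨n + 1, hn⟩ : Fin m) = ⟨n, by omega⟩ + 1 :=
      Fin.ext (Fin.val_add_one_of_lt' (i := ⟨n, by omega⟩) hn).symm
    exact hsucc ▸ succ _ hn (ih (by omega))

theorem Fin.eq_iterate_of_apply_add_one {α : Type*} {m : ℕ} [NeZero m] {c : Fin m → α}
    {f : α → α} (hc : ∀ i, c (i + 1) = f (c i)) (i : Fin m) : c i = f^[i] (c 0) := by
  induction i using Fin.induction_add_one with
  | zero => rfl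
  | succ i hi ih => rw [hc, Fin.val_add_one_of_lt' hi, Function.iterate_succ_apply', ih]

theorem AddAut.coe_nsmul {G : Type*} [Add G] (α : AddAut G) (n : ℕ) : ⇑(n • α) = (⇑α)^[n] := by
  induction n with
  | zero => rfl
  | succ n ih => rw [succ_nsmul', Function.iterate_succ', ← ih]; rfl

theorem AddMonoidHom.mem_ker_sub_id {G : Type*} [AddCommGroup G] {σ : G →+ G} {x : G} :
    x ∈ (σ - AddMonoidHom.id G).ker ↔ σ x = x := by
  simp [sub_eq_zero]

theorem AddSubgroup.closure_neg_add_apply_eq_range {G F : Type*} [AddCommGroup G] [FunLike F G G]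
    [AddMonoidHomClass F G G] (σ : F) :
    AddSubgroup.closure {x : G | ∃ g, x = -g + σ g} = ((σ : G →+ G) - AddMonoidHom.id G).range := by
  rw [← AddSubgroup.closure_eq ((σ : G →+ G) - AddMonoidHom.id G).range]
  congr 1
  ext x
  simp [eq_comm, neg_add_eq_sub]

namespace AddMonoidHom

variable {G : Type*} [AddCommGroup G] (σ : G →+ G) (m : ℕ)

def orbitSum (x : G) : G :=
  ∑ i ∈ Finset.range m, σ^[i] x

variable {σ m}

theorem apply_orbitSum (hσ : (⇑σ)^[m] = _root_.id) (x : G) :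
    σ (σ.orbitSum m x) = σ.orbitSum m x := by
  have hshift := Finset.sum_range_succ' (fun i => σ^[i] x) m
  rw [Finset.sum_range_succ, hσ] at hshift
  simp only [orbitSum, map_sum, ← Function.iterate_succ_apply' σ]
  simpa using hshift.symm

theorem orbitSum_eq_sum_fin [NeZero m] (x : G) : σ.orbitSum m x = ∑ i : Fin m, σ^[i] x :=
  (Fin.sum_univ_eq_sum_range (fun i => σ^[i] x) m).symm

variable [NeZero m] {p : Fin m → AddSubgroup G}

theorem iterate_mem_of_map_le (hmaps : ∀ i, (p i).map σ ≤ p (i + 1)) {x : G} (hx : x ∈ p 0)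
    (i : Fin m) : σ^[i] x ∈ p i := by
  induction i using Fin.induction_add_one with
  | zero => exact hx
  | succ i hi ih =>
    rw [Fin.val_add_one_of_lt' hi, Function.iterate_succ_apply']
    exact hmaps i (AddSubgroup.mem_map_of_mem σ ih)

theorem injOn_orbitSum (hind : iSupIndep p) (hmaps : ∀ i, (p i).map σ ≤ p (i + 1)) :
    Set.InjOn (σ.orbitSum m) (p 0) := by
  intro x hx y hy hxy
  rw [orbitSum_eq_sum_fin, orbitSum_eq_sum_fin] at hxy
  simpa using congrFun (hind.eq_of_sum_eq_sum (iterate_mem_of_map_le hmaps hx)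
    (iterate_mem_of_map_le hmaps hy) hxy) 0

theorem exists_orbitSum_eq (hind : iSupIndep p) (hsup : ⨆ i, p i = ⊤)
    (hmaps : ∀ i, (p i).map σ ≤ p (i + 1)) {g : G} (hg : σ g = g) :
    ∃ x ∈ p 0, σ.orbitSum m x = g := by
  classical
  obtain ⟨c, hc, rfl⟩ := AddSubgroup.exists_sum_eq_of_mem_iSup (hsup ▸ AddSubgroup.mem_top g)
  have hshift : (fun i => σ (c (i - 1))) = c := by
    refine hind.eq_of_sum_eq_sum (fun i => ?_) hc ?_
    · simpa using hmaps (i - 1) (AddSubgroup.mem_map_of_mem σ (hc (i - 1)))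
    · rw [← hg, map_sum]
      exact Fintype.sum_equiv (Equiv.subRight 1) _ _ fun i => rfl
  have hiter := Fin.eq_iterate_of_apply_add_one (c := c) (f := σ)
    fun i => by simpa using (congrFun hshift (i + 1)).symm
  exact ⟨c 0, hc 0, by rw [orbitSum_eq_sum_fin]; exact sum_congr rfl fun i _ => (hiter i).symm⟩

theorem card_ker_sub_id_eq_card (hind : iSupIndep p) (hsup : ⨆ i, p i = ⊤)
    (hmaps : ∀ i, (p i).map σ ≤ p (i + 1)) (hσ : (⇑σ)^[m] = _root_.id) :
    Nat.card (σ - AddMonoidHom.id G).ker = Nat.card (p 0) := by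
  refine (Nat.card_eq_of_bijective
    (fun x : p 0 => (⟨σ.orbitSum m x, mem_ker_sub_id.2 (apply_orbitSum hσ x)⟩ :
      (σ - AddMonoidHom.id G).ker))
      ⟨fun x y hxy => Subtype.ext (injOn_orbitSum hind hmaps x.2 y.2 (congrArg Subtype.val hxy)),
        fun ⟨g, hg⟩ => ?_⟩).symm
  obtain ⟨x, hx, hxg⟩ := exists_orbitSum_eq hind hsup hmaps (mem_ker_sub_id.1 hg)
  exact ⟨⟨x, hx⟩, Subtype.ext hxg⟩

end AddMonoidHom

theorem stmt_8_general {G : Type*} [AddCommGroup G] [Finite G] (m : ℕ) [NeZero m]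
    (Gsub : Fin m → AddSubgroup G)
    (hsup : ⨆ i, Gsub i = ⊤)
    (hind : iSupIndep Gsub)
    (α : AddAut G) (hord : addOrderOf α = m)
    (hperm : ∀ i : Fin m, (Gsub i).map α.toAddMonoidHom = Gsub (i + 1)) :
    (AddSubgroup.closure {x : G | ∃ g : G, x = -g + α g}).index
      = Nat.card (Gsub 0) := by
  have hperiod : (⇑(α : G →+ G))^[m] = id := by
    rw [AddMonoidHom.coe_coe, ← AddAut.coe_nsmul, ← hord, addOrderOf_nsmul_eq_zero]; rfl
  rw [AddSubgroup.closure_neg_add_apply_eq_range α, AddSubgroup.index_range]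
  exact AddMonoidHom.card_ker_sub_id_eq_card hind hsup (fun i => (hperm i).le) hperiod

/-- Let a finite abelian group `G` be the direct sum of `m` mutually isomorphic
subgroups `G₀, …, G_{m-1}` cyclically permuted by an automorphism `α` of order `m`
coprime to `|G|`. Then the index of `[G,α]` in `G` equals `|G₀|`. -/
theorem stmt_8 {G : Type*} [AddCommGroup G] [Finite G] (m : ℕ) [NeZero m]
    (Gsub : Fin m → AddSubgroup G)
    (hiso : ∀ i : Fin m, Nonempty (Gsub i ≃+ Gsub 0))
    (hsup : ⨆ i, Gsub i = ⊤)
    (hind : iSupIndep Gsub)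
    (α : AddAut G) (hord : addOrderOf α = m)
    (hcop : Nat.Coprime m (Nat.card G))
    (hperm : ∀ i : Fin m, (Gsub i).map α.toAddMonoidHom = Gsub (i + 1)) :
    (AddSubgroup.closure {x : G | ∃ g : G, x = -g + α g}).index
      = Nat.card (Gsub 0) :=
  stmt_8_general m Gsub hsup hind α hord hperm
end

section
/- Let m ≥ 2 and let G = G₁ ∘ G₂ ∘ ⋯ ∘ G_m be a finite group which is a central product of isomorphic extra-special subgroups G_i of order p³ (p prime). Suppose G admits a coprime automorphism α of order m cyclically permuting the factors G_i and satisfying G' ≤ C_G(α). Then [G,α] is extra-special and has index p² in G. -/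
/-!
All commutators of `G` lie in the common centre `Z` of the factors, which has order `p`, so
`G' = Z(G) = Z` and `V = G/G'` is abelian: the direct product of the images `Vᵢ` of the factors,
each of order `p²`, permuted cyclically by the automorphism `ᾱ` of `V` induced by `α`.
Modulo `G'` the subgroup `[G,α]` is `[V,ᾱ]`, the image of `v ↦ v⁻¹ ᾱ v`, so its index is
`|C_V(ᾱ)|`. Since the order of `ᾱ` is coprime to `|V|`, the norm `∏ₖ ᾱᵏ` maps `V` onto `C_V(ᾱ)`
and kills `[V,ᾱ]`; restricted to `V₀` it is injective with the same image, so the index is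
`|V₀| = p²`, and `[V,ᾱ] ∩ C_V(ᾱ) = 1`. An element `x` centralising `[G,α]` has `x⁻¹ α x` central,
so `x̄ ∈ [V,ᾱ] ∩ C_V(ᾱ)`, whence `Z([G,α]) = G'`. Finally `G' ≤ [G,α]'`: for non-commuting
`g, h ∈ G₀`, `[g⁻¹αg, h⁻¹αh] = [g,h]²` when `m = 2` (nontrivial as `p` is odd), and
`[g⁻¹αg, (αh)⁻¹α²h] = [g,h]⁻¹` when `m ≥ 3`.
-/

/-- A group is extra-special (for the prime `p`) if it is a `p`-group whose derived
subgroup and center coincide and have order `p`. -/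
def IsExtraspecial (p : ℕ) (H : Type*) [Group H] : Prop :=
  IsPGroup p H ∧ commutator H = Subgroup.center H ∧ Nat.card (Subgroup.center H) = p

open Subgroup
open scoped commutatorElement
open Fin.NatCast

section CentralCommutators

variable {G : Type*} [Group G]

theorem commutatorElement_mul_left_of_mem_center (hc : ∀ x y : G, ⁅x, y⁆ ∈ center G)
    (a b c : G) : ⁅a * b, c⁆ = ⁅a, c⁆ * ⁅b, c⁆ := by
  have h : a * ⁅b, c⁆ = ⁅b, c⁆ * a := mem_center_iff.mp (hc b c) a
  calc ⁅a * b, c⁆ = a * ⁅b, c⁆ * a⁻¹ * ⁅a, c⁆ := by simp only [commutatorElement_def]; group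
    _ = ⁅b, c⁆ * ⁅a, c⁆ := by rw [h]; group
    _ = ⁅a, c⁆ * ⁅b, c⁆ := (mem_center_iff.mp (hc b c) _).symm

theorem commutatorElement_mul_right_of_mem_center (hc : ∀ x y : G, ⁅x, y⁆ ∈ center G)
    (a b c : G) : ⁅a, b * c⁆ = ⁅a, b⁆ * ⁅a, c⁆ := by
  have h : b * ⁅a, c⁆ = ⁅a, c⁆ * b := mem_center_iff.mp (hc a c) b
  calc ⁅a, b * c⁆ = ⁅a, b⁆ * (b * ⁅a, c⁆ * b⁻¹) := by simp only [commutatorElement_def]; group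
    _ = ⁅a, b⁆ * ⁅a, c⁆ := by rw [h]; group

theorem commutatorElement_inv_left_of_mem_center (hc : ∀ x y : G, ⁅x, y⁆ ∈ center G)
    (a b : G) : ⁅a⁻¹, b⁆ = ⁅a, b⁆⁻¹ := by
  rw [eq_inv_iff_mul_eq_one, ← commutatorElement_mul_left_of_mem_center hc, inv_mul_cancel,
    commutatorElement_one_left]

theorem commutatorElement_inv_right_of_mem_center (hc : ∀ x y : G, ⁅x, y⁆ ∈ center G)
    (a b : G) : ⁅a, b⁻¹⁆ = ⁅a, b⁆⁻¹ := by
  rw [eq_inv_iff_mul_eq_one, ← commutatorElement_mul_right_of_mem_center hc, inv_mul_cancel,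
    commutatorElement_one_right]

end CentralCommutators

theorem Abelianization.of_surjective {G : Type*} [Group G] :
    Function.Surjective (Abelianization.of : G →* Abelianization G) :=
  QuotientGroup.mk'_surjective _

namespace Subgroup

variable {G : Type*} [Group G]

theorem card_map_mul_card_ker {G' : Type*} [Group G'] {f : G →* G'} {K : Subgroup G}
    (h : f.ker ≤ K) : Nat.card (K.map f) * Nat.card f.ker = Nat.card K := by
  rw [← relIndex_ker, ← Nat.card_congr (subgroupOfEquivOfLe h).toEquiv, mul_comm]
  exact card_mul_index _

theorem map_subtype_center (K : Subgroup G) :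
    (center K).map K.subtype = K ⊓ centralizer (K : Set G) := by
  ext x
  constructor
  · rintro ⟨y, hy, rfl⟩
    exact ⟨y.2, mem_centralizer_iff.mpr fun z hz =>
      congrArg Subtype.val (mem_center_iff.mp hy ⟨z, hz⟩)⟩
  · rintro ⟨hx, hxc⟩
    exact ⟨⟨x, hx⟩, mem_center_iff.mpr fun z => Subtype.ext (mem_centralizer_iff.mp hxc z z.2),
      rfl⟩

theorem le_of_mem_of_card_prime {K L : Subgroup G} (hK : (Nat.card K).Prime) {x : G}
    (hxK : x ∈ K) (hxL : x ∈ L) (hx : x ≠ 1) : K ≤ L := by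
  have : Finite K := Nat.finite_of_card_ne_zero hK.ne_zero
  have horder : orderOf x = Nat.card K :=
    (hK.eq_one_or_self_of_dvd _ (orderOf_dvd_natCard K hxK)).resolve_left
      (by rwa [orderOf_eq_one_iff])
  rw [← eq_of_le_of_card_ge (zpowers_le.mpr hxK) (by rw [Nat.card_zpowers, horder])]
  exact zpowers_le.mpr hxL

theorem commutatorElement_mem_of_iSup_eq_top {ι : Type*} {H : ι → Subgroup G} {Z : Subgroup G}
    (hZ : Z ≤ center G) (hsup : ⨆ i, H i = ⊤) {x : G} (hx : ∀ i, ∀ y ∈ H i, ⁅x, y⁆ ∈ Z)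
    (y : G) : ⁅x, y⁆ ∈ Z := by
  refine iSup_induction H (C := fun y => ⁅x, y⁆ ∈ Z) (hsup ▸ mem_top y) hx
    (by rw [commutatorElement_one_right]; exact one_mem Z) fun y₁ y₂ h₁ h₂ => ?_
  rw [commutatorElement_mul_right_eq_mul_conj, mul_assoc _ y₁,
    mem_center_iff.mp (hZ h₂) y₁, mul_assoc, mul_inv_cancel_right]
  exact mul_mem h₁ h₂

end Subgroup

theorem IsPGroup.of_iSup_eq_top {p : ℕ} {V ι : Type*} [CommGroup V]
    {H : ι → Subgroup V} (hH : ∀ i, IsPGroup p (H i)) (hsup : ⨆ i, H i = ⊤) : IsPGroup p V := by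
  intro v
  refine iSup_induction H (C := fun v => ∃ k, v ^ p ^ k = 1) (hsup ▸ mem_top v)
    (fun i v hv => ?_) ⟨0, one_pow _⟩ fun _ _ => (CommMonoid.primaryComponent V p).mul_mem
  obtain ⟨k, hk⟩ := hH i ⟨v, hv⟩
  exact ⟨k, congrArg Subtype.val hk⟩

theorem IsPGroup.of_iSup_eq_top_of_isPGroup_commutator {p : ℕ} {G ι : Type*} [Group G]
    {H : ι → Subgroup G}
    (hH : ∀ i, IsPGroup p (H i)) (hsup : ⨆ i, H i = ⊤) (hG' : IsPGroup p (commutator G)) :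
    IsPGroup p G := by
  have hV : IsPGroup p (Abelianization G) :=
    of_iSup_eq_top (fun i => (hH i).map Abelianization.of)
      (by rw [← Subgroup.map_iSup, hsup, map_top_of_surjective _ Abelianization.of_surjective])
  have h := (hV.to_subgroup ⊤).comap_of_ker_isPGroup Abelianization.of
    (by rwa [Abelianization.ker_of])
  rw [comap_top] at h
  exact h.of_equiv topEquiv

section CentralProduct

variable {G : Type*} [Group G]

structure IsCentralProduct {ι : Type*} (H : ι → Subgroup G) : Prop where
  iSup_eq_top : ⨆ i, H i = ⊤
  commute : ∀ i j, i ≠ j → ∀ x ∈ H i, ∀ y ∈ H j, Commute x y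
  inf_eq_inf_centralizer : ∀ i j, i ≠ j → H i ⊓ H j = H i ⊓ centralizer (H i : Set G)

namespace IsCentralProduct

variable {ι : Type*} {H : ι → Subgroup G}

theorem le_centralizer (hG : IsCentralProduct H) {i j : ι} (hij : i ≠ j) :
    H j ≤ centralizer (H i : Set G) :=
  fun y hy => mem_centralizer_iff.mpr fun x hx => (hG.commute i j hij x hx y hy).eq

theorem inf_centralizer_eq (hG : IsCentralProduct H) (i j : ι) :
    H i ⊓ centralizer (H i : Set G) = H j ⊓ centralizer (H j : Set G) := by
  rcases eq_or_ne i j with rfl | hij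
  · rfl
  · rw [← hG.inf_eq_inf_centralizer i j hij, inf_comm, hG.inf_eq_inf_centralizer j i hij.symm]

theorem inf_centralizer_le_center (hG : IsCentralProduct H) (i : ι) :
    H i ⊓ centralizer (H i : Set G) ≤ center G := by
  intro z hz
  refine mem_center_iff.mpr fun y => (commutatorElement_eq_one_iff_mul_comm.mp ?_).symm
  refine mem_bot.mp (commutatorElement_mem_of_iSup_eq_top bot_le hG.iSup_eq_top
    (fun j y hy => ?_) y)
  rw [mem_bot, commutatorElement_eq_one_iff_commute]
  rcases eq_or_ne i j with rfl | hij
  · exact (mem_centralizer_iff.mp hz.2 y hy).symm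
  · exact hG.commute i j hij z hz.1 y hy

theorem commutator_self_eq (hG : IsCentralProduct H)
    (hH : ∀ i, commutator (H i) = center (H i)) (i j : ι) :
    ⁅H j, H j⁆ = H i ⊓ centralizer (H i : Set G) := by
  rw [← map_subtype_commutator, hH, map_subtype_center, hG.inf_centralizer_eq]

theorem commutator_eq (hG : IsCentralProduct H) (hH : ∀ i, commutator (H i) = center (H i))
    (i : ι) : commutator G = H i ⊓ centralizer (H i : Set G) := by
  refine le_antisymm ?_ (hG.commutator_self_eq hH i i ▸ commutator_mono le_top le_top)
  have hZ := hG.inf_centralizer_le_center i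
  have hgen : ∀ j, ∀ y ∈ H j, ∀ x, ⁅y, x⁆ ∈ H i ⊓ centralizer (H i : Set G) := by
    refine fun j y hy => commutatorElement_mem_of_iSup_eq_top hZ hG.iSup_eq_top fun k x hx => ?_
    rcases eq_or_ne j k with rfl | hjk
    · exact hG.commutator_self_eq hH i j ▸ commutator_mem_commutator hy hx
    · rw [(hG.commute j k hjk y hy x hx).commutator_eq]
      exact one_mem _
  rw [commutator_def, commutator_le]
  refine fun x _ y _ => commutatorElement_mem_of_iSup_eq_top hZ hG.iSup_eq_top
    (fun j y hy => ?_) y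
  rw [← commutatorElement_inv]
  exact inv_mem (hgen j y hy x)

theorem center_le_inf_centralizer (hG : IsCentralProduct H) [Fintype ι] [DecidableEq ι]
    (i : ι) : center G ≤ H i ⊓ centralizer (H i : Set G) := by
  have hcomm : Pairwise fun i j => ∀ x y : G, x ∈ H i → y ∈ H j → Commute x y :=
    fun i j hij x y hx hy => hG.commute i j hij x hx y hy
  intro x hx
  obtain ⟨f, rfl⟩ : x ∈ (noncommPiCoprod hcomm).range := by
    rw [noncommPiCoprod_range, hG.iSup_eq_top]
    exact mem_top x
  rw [noncommPiCoprod_apply] at hx ⊢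
  refine noncommProd_mem _ _ fun j _ => hG.inf_centralizer_eq j i ▸ mem_inf.mpr ⟨(f j).2, ?_⟩
  -- `x = f j * r` with `r` centralizing `H j`, so `f j = x * r⁻¹` centralizes `H j` too
  rw [← Finset.mul_noncommProd_erase Finset.univ (Finset.mem_univ j) (fun k => (f k : G))
    fun a _ b _ h => hcomm h _ _ (f a).2 (f b).2] at hx
  obtain ⟨r, hr, hx⟩ : ∃ r ∈ centralizer (H j : Set G), (f j : G) * r ∈ center G :=
    ⟨_, noncommProd_mem _ _ fun k hk =>
      hG.le_centralizer (Finset.ne_of_mem_erase hk).symm (f k).2, hx⟩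
  have hfj := mul_mem (center_le_centralizer _ hx) (inv_mem hr)
  rwa [mul_inv_cancel_right] at hfj

theorem iSupIndep_map_abelianization_of (hG : IsCentralProduct H)
    (hH : ∀ i, commutator (H i) = center (H i)) :
    iSupIndep fun i => (H i).map (Abelianization.of : G →* Abelianization G) := by
  intro i
  rw [disjoint_iff_inf_le]
  rintro _ ⟨⟨g, hg, rfl⟩, hq⟩
  have hle : (⨆ (j) (_ : j ≠ i), (H j).map Abelianization.of) ≤
      (centralizer (H i : Set G)).map Abelianization.of :=
    iSup₂_le fun j hj => map_mono (hG.le_centralizer hj.symm)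
  obtain ⟨c, hc, hcg⟩ := hle hq
  have hZ : c⁻¹ * g ∈ H i ⊓ centralizer (H i : Set G) := by
    rw [← hG.commutator_eq hH, ← Abelianization.ker_of, MonoidHom.mem_ker, map_mul, map_inv,
      hcg, inv_mul_cancel]
  have hgc := mul_mem hc (center_le_centralizer _ (hG.inf_centralizer_le_center i hZ))
  rw [mul_inv_cancel_left] at hgc
  rw [mem_bot, ← MonoidHom.mem_ker, Abelianization.ker_of, hG.commutator_eq hH i]
  exact ⟨hg, hgc⟩

end IsCentralProduct

end CentralProduct


namespace MulAut

section CommGroup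

variable {V : Type*} [CommGroup V] (σ : MulAut V)

def commutatorMap : V →* V := (MonoidHom.id V)⁻¹ * (σ : V →* V)

def normMap (m : ℕ) : V →* V := ∏ k ∈ Finset.range m, ((σ ^ k : MulAut V) : V →* V)

variable {σ}

@[simp]
theorem commutatorMap_apply (v : V) : σ.commutatorMap v = v⁻¹ * σ v := rfl

theorem mem_ker_commutatorMap {v : V} : v ∈ σ.commutatorMap.ker ↔ σ v = v := by
  rw [MonoidHom.mem_ker, commutatorMap_apply, inv_mul_eq_one, eq_comm]

theorem normMap_apply (m : ℕ) (v : V) : σ.normMap m v = ∏ k ∈ Finset.range m, (σ ^ k) v :=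
  MonoidHom.finsetProd_apply _ _ _

theorem apply_normMap (m : ℕ) (v : V) : σ (σ.normMap m v) = σ.normMap m (σ v) := by
  simp only [normMap_apply, map_prod, ← mul_apply, ← pow_succ', pow_succ]

variable {m : ℕ}

theorem normMap_apply_self (hσ : σ ^ m = 1) (v : V) : σ.normMap m (σ v) = σ.normMap m v := by
  have h := Finset.prod_range_succ' (fun k => (σ ^ k) v) m
  rw [Finset.prod_range_succ, hσ, pow_zero] at h
  simpa only [normMap_apply, pow_succ, mul_apply] using (mul_right_cancel h).symm

theorem normMap_apply_pow (hσ : σ ^ m = 1) (k : ℕ) (v : V) :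
    σ.normMap m ((σ ^ k) v) = σ.normMap m v := by
  induction k with
  | zero => rfl
  | succ k ih => rw [pow_succ', mul_apply, normMap_apply_self hσ, ih]

theorem normMap_mem_ker_commutatorMap (hσ : σ ^ m = 1) (v : V) :
    σ.normMap m v ∈ σ.commutatorMap.ker := by
  rw [mem_ker_commutatorMap, apply_normMap, normMap_apply_self hσ]

theorem normMap_commutatorMap (hσ : σ ^ m = 1) (v : V) :
    σ.normMap m (σ.commutatorMap v) = 1 := by
  rw [commutatorMap_apply, map_mul, map_inv, normMap_apply_self hσ, inv_mul_cancel]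

theorem normMap_eq_pow_of_mem_ker {v : V} (hv : v ∈ σ.commutatorMap.ker) :
    σ.normMap m v = v ^ m := by
  rw [mem_ker_commutatorMap] at hv
  have hk : ∀ k : ℕ, (σ ^ k) v = v := fun k => by
    induction k with
    | zero => rfl
    | succ k ih => rw [pow_succ', mul_apply, ih, hv]
  simp only [normMap_apply, hk, Finset.prod_const, Finset.card_range]

theorem disjoint_ker_range_commutatorMap (hσ : σ ^ m = 1) (hcop : (Nat.card V).Coprime m) :
    Disjoint σ.commutatorMap.ker σ.commutatorMap.range := by
  rw [disjoint_iff_inf_le]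
  rintro _ ⟨hv, u, rfl⟩
  have h : σ.commutatorMap u ^ m = 1 ^ m := by
    rw [← normMap_eq_pow_of_mem_ker hv, normMap_commutatorMap hσ, one_pow]
  exact (hcop.pow_left_bijective.injective h :)

theorem range_normMap (hσ : σ ^ m = 1) (hcop : (Nat.card V).Coprime m) :
    (σ.normMap m).range = σ.commutatorMap.ker := by
  refine le_antisymm ?_ fun v hv => ?_
  · rintro _ ⟨v, rfl⟩
    exact normMap_mem_ker_commutatorMap hσ v
  · have hcopK : (Nat.card σ.commutatorMap.ker).Coprime m :=
      hcop.coprime_dvd_left (card_subgroup_dvd_card _)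
    obtain ⟨r, hr⟩ := hcopK.pow_left_bijective.surjective ⟨v, hv⟩
    refine ⟨r, ?_⟩
    rw [normMap_eq_pow_of_mem_ker r.2]
    exact congrArg Subtype.val hr

variable [NeZero m] {H : Fin m → Subgroup V}

theorem pow_apply_mem_of_map_eq (hH : ∀ i, (H i).map σ.toMonoidHom = H (i + 1)) (k : ℕ)
    {i : Fin m} {v : V} (hv : v ∈ H i) : (σ ^ k) v ∈ H (i + k) := by
  induction k with
  | zero => simpa using hv
  | succ k ih =>
    rw [pow_succ', mul_apply, Nat.cast_succ, ← add_assoc, ← hH]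
    exact mem_map_of_mem _ ih

theorem exists_mem_normMap_eq (hσ : σ ^ m = 1) (hH : ∀ i, (H i).map σ.toMonoidHom = H (i + 1))
    (hsup : ⨆ i, H i = ⊤) (v : V) : ∃ u ∈ H 0, σ.normMap m u = σ.normMap m v := by
  refine iSup_induction H (C := fun v => ∃ u ∈ H 0, σ.normMap m u = σ.normMap m v)
    (hsup ▸ mem_top v) (fun i v hv => ?_) ⟨1, one_mem _, rfl⟩ fun v w hv hw => ?_
  · refine ⟨(σ ^ (m - i : ℕ)) v, ?_, normMap_apply_pow hσ _ v⟩
    have h := pow_apply_mem_of_map_eq hH (m - i : ℕ) hv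
    have h0 : i + ((m - i : ℕ) : Fin m) = 0 := by
      rw [Fin.ext_iff, Fin.val_add, Fin.val_natCast, Fin.val_zero, Nat.add_mod_mod,
        Nat.add_sub_cancel' i.isLt.le, Nat.mod_self]
    rwa [h0] at h
  · obtain ⟨u, hu, huv⟩ := hv
    obtain ⟨u', hu', huw⟩ := hw
    exact ⟨u * u', mul_mem hu hu', by rw [map_mul, map_mul, huv, huw]⟩

theorem eq_one_of_normMap_eq_one (hH : ∀ i, (H i).map σ.toMonoidHom = H (i + 1))
    (hind : iSupIndep H) {u : V} (hu : u ∈ H 0) (h : σ.normMap m u = 1) : u = 1 := by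
  obtain ⟨n, rfl⟩ : ∃ n, m = n + 1 := Nat.exists_eq_succ_of_ne_zero (NeZero.ne m)
  rw [normMap_apply, Finset.prod_range_succ', pow_zero, one_apply, mul_eq_one_iff_eq_inv'] at h
  have hrest : (∏ k ∈ Finset.range n, (σ ^ (k + 1)) u) ∈ ⨆ (j) (_ : j ≠ 0), H j := by
    refine prod_mem fun k hk => mem_iSup_of_mem ((k + 1 : ℕ) : Fin (n + 1)) ?_
    refine mem_iSup_of_mem ?_ (by simpa using pow_apply_mem_of_map_eq hH (k + 1) hu)
    rw [Ne, Fin.natCast_eq_zero]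
    exact Nat.not_dvd_of_pos_of_lt k.succ_pos (by simpa using hk)
  exact (hind 0).le_bot (mem_inf.mpr ⟨hu, by rw [h]; exact inv_mem hrest⟩)

theorem card_ker_commutatorMap (hσ : σ ^ m = 1) (hcop : (Nat.card V).Coprime m)
    (hH : ∀ i, (H i).map σ.toMonoidHom = H (i + 1)) (hsup : ⨆ i, H i = ⊤)
    (hind : iSupIndep H) : Nat.card σ.commutatorMap.ker = Nat.card (H 0) := by
  set μ := (σ.normMap m).comp (H 0).subtype
  have hμ : Function.Injective μ := (injective_iff_map_eq_one μ).mpr fun u hu =>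
    Subtype.ext (eq_one_of_normMap_eq_one hH hind u.2 hu)
  have hrange : μ.range = σ.commutatorMap.ker := by
    rw [← range_normMap hσ hcop]
    refine le_antisymm (fun _ ⟨u, hu⟩ => ⟨u, hu⟩) ?_
    rintro _ ⟨v, rfl⟩
    obtain ⟨u, hu, huv⟩ := exists_mem_normMap_eq hσ hH hsup v
    exact ⟨⟨u, hu⟩, huv⟩
  rw [← hrange]
  exact (Nat.card_congr (MonoidHom.ofInjective hμ).toEquiv).symm

end CommGroup

section Group

variable {G : Type*} [Group G] (α : MulAut G)

def commutatorSubgroup : Subgroup G := closure {y | ∃ g : G, y = g⁻¹ * α g}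

abbrev abelianization : MulAut (Abelianization G) := α.abelianizationCongr

@[simp]
theorem abelianization_of (g : G) :
    α.abelianization (Abelianization.of g) = Abelianization.of (α g) :=
  rfl

theorem abelianization_pow_apply (k : ℕ) (g : G) :
    (α.abelianization ^ k) (Abelianization.of g) = Abelianization.of ((α ^ k) g) := by
  induction k with
  | zero => rfl
  | succ k ih => rw [pow_succ', mul_apply, ih, pow_succ', mul_apply]; rfl

theorem abelianization_pow_eq_one {m : ℕ} (h : α ^ m = 1) : α.abelianization ^ m = 1 := by
  ext x
  obtain ⟨g, rfl⟩ := Abelianization.of_surjective x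
  rw [abelianization_pow_apply, h]
  rfl

theorem map_of_commutatorSubgroup :
    α.commutatorSubgroup.map Abelianization.of = α.abelianization.commutatorMap.range := by
  rw [commutatorSubgroup, MonoidHom.map_closure]
  refine le_antisymm ((closure_le _).mpr ?_) ?_
  · rintro _ ⟨_, ⟨g, rfl⟩, rfl⟩
    exact ⟨Abelianization.of g, by simp⟩
  · rintro _ ⟨v, rfl⟩
    obtain ⟨g, rfl⟩ := Abelianization.of_surjective v
    exact subset_closure ⟨g⁻¹ * α g, ⟨g, rfl⟩, by simp⟩

variable {α}

theorem index_commutatorSubgroup [Finite G] (h : commutator G ≤ α.commutatorSubgroup) :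
    α.commutatorSubgroup.index = Nat.card α.abelianization.commutatorMap.ker := by
  rw [← index_map_eq _ Abelianization.of_surjective (by rwa [Abelianization.ker_of]),
    map_of_commutatorSubgroup, index_range]

theorem commutatorElement_inv_mul_apply (hc : ∀ x y : G, ⁅x, y⁆ ∈ center G)
    (hfix : ∀ x ∈ commutator G, α x = x) (g h : G) :
    ⁅g⁻¹ * α g, h⁻¹ * α h⁆ = ⁅g, h⁆ * ⁅g, α h⁆⁻¹ * (⁅α g, h⁆⁻¹ * ⁅g, h⁆) := by
  rw [commutatorElement_mul_left_of_mem_center hc, commutatorElement_mul_right_of_mem_center hc,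
    commutatorElement_mul_right_of_mem_center hc, commutatorElement_inv_left_of_mem_center hc,
    commutatorElement_inv_left_of_mem_center hc, commutatorElement_inv_right_of_mem_center hc,
    commutatorElement_inv_right_of_mem_center hc, inv_inv, ← map_commutatorElement,
    hfix _ (commutator_mem_commutator (mem_top g) (mem_top h))]

theorem inv_mul_apply_mem_center (hc : ∀ x y : G, ⁅x, y⁆ ∈ center G)
    (hfix : ∀ x ∈ commutator G, α x = x) {x : G} (hx : ∀ g, Commute x (g⁻¹ * α g)) :
    x⁻¹ * α x ∈ center G := by
  have hxα : ∀ g, ⁅x, α g⁆ = ⁅x, g⁆ := fun g => by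
    have h := (hx g).commutator_eq
    rwa [commutatorElement_mul_right_of_mem_center hc, commutatorElement_inv_right_of_mem_center hc,
      inv_mul_eq_one, eq_comm] at h
  refine mem_center_iff.mpr fun y => ?_
  obtain ⟨g, rfl⟩ := α.surjective y
  refine (commutatorElement_eq_one_iff_mul_comm.mp ?_).symm
  rw [commutatorElement_mul_left_of_mem_center hc, commutatorElement_inv_left_of_mem_center hc,
    ← map_commutatorElement, hfix _ (commutator_mem_commutator (mem_top x) (mem_top g)), hxα,
    inv_mul_cancel]

theorem center_commutatorSubgroup_le {m : ℕ} (hc : ∀ x y : G, ⁅x, y⁆ ∈ center G)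
    (hcenter : center G ≤ commutator G) (hfix : ∀ x ∈ commutator G, α x = x) (hα : α ^ m = 1)
    (hcop : (Nat.card G).Coprime m) :
    center α.commutatorSubgroup ≤ (commutator G).subgroupOf α.commutatorSubgroup := by
  intro x hx
  have hcomm : ∀ g, Commute (x : G) (g⁻¹ * α g) := fun g =>
    (congrArg Subtype.val (mem_center_iff.mp hx ⟨_, subset_closure ⟨g, rfl⟩⟩)).symm
  have hfixed : Abelianization.of (x : G) ∈ α.abelianization.commutatorMap.ker := by
    rw [MonoidHom.mem_ker, commutatorMap_apply, abelianization_of, ← map_inv, ← map_mul,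
      ← MonoidHom.mem_ker, Abelianization.ker_of]
    exact hcenter (inv_mul_apply_mem_center hc hfix hcomm)
  have hrange : Abelianization.of (x : G) ∈ α.abelianization.commutatorMap.range :=
    map_of_commutatorSubgroup α ▸ mem_map_of_mem _ x.2
  have hcopV : (Nat.card (Abelianization G)).Coprime m :=
    hcop.coprime_dvd_left (card_dvd_of_surjective _ Abelianization.of_surjective)
  have h := (disjoint_ker_range_commutatorMap (abelianization_pow_eq_one α hα) hcopV).le_bot
    ⟨hfixed, hrange⟩
  rwa [mem_bot, ← MonoidHom.mem_ker, Abelianization.ker_of] at h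

theorem isExtraspecial_commutatorSubgroup {p m : ℕ} (hc : ∀ x y : G, ⁅x, y⁆ ∈ center G)
    (hcenter : center G ≤ commutator G) (hfix : ∀ x ∈ commutator G, α x = x) (hα : α ^ m = 1)
    (hcop : (Nat.card G).Coprime m) (hpG : IsPGroup p G) (hcard : Nat.card (commutator G) = p)
    (hle : commutator G ≤ ⁅α.commutatorSubgroup, α.commutatorSubgroup⁆) :
    IsExtraspecial p α.commutatorSubgroup := by
  have hN : commutator G ≤ α.commutatorSubgroup := hle.trans (commutator_le_self _)
  have hcomm :
      commutator α.commutatorSubgroup = (commutator G).subgroupOf α.commutatorSubgroup := by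
    refine map_injective α.commutatorSubgroup.subtype_injective ?_
    rw [map_subtype_commutator, subgroupOf_map_subtype, inf_of_le_left hN]
    exact le_antisymm (commutator_mono le_top le_top) hle
  have hcenterN :
      center α.commutatorSubgroup = (commutator G).subgroupOf α.commutatorSubgroup :=
    le_antisymm (center_commutatorSubgroup_le hc hcenter hfix hα hcop) fun x hx =>
      mem_center_iff.mpr fun y => Subtype.ext ((mem_center_iff.mp
        (commutator_le.mpr (fun x _ y _ => hc x y) hx) y))
  refine ⟨hpG.to_subgroup _, hcomm.trans hcenterN.symm, ?_⟩
  rw [hcenterN, ← hcard]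
  exact Nat.card_congr (subgroupOfEquivOfLe hN).toEquiv

end Group

end MulAut

open MulAut in
theorem IsCentralProduct.commutator_commutatorSubgroup_ne_bot {G : Type*} [Group G] [Finite G]
    {m : ℕ} [NeZero m] (hm : 2 ≤ m) {H : Fin m → Subgroup G} (hG : IsCentralProduct H)
    {α : MulAut G} (hperm : ∀ i, (H i).map α.toMonoidHom = H (i + 1))
    (hc : ∀ x y : G, ⁅x, y⁆ ∈ center G) (hfix : ∀ x ∈ commutator G, α x = x)
    (hcop : (Nat.card G).Coprime m) (h0 : commutator (H 0) ≠ ⊥) :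
    ⁅α.commutatorSubgroup, α.commutatorSubgroup⁆ ≠ ⊥ := by
  obtain ⟨⟨g, hg⟩, ⟨h, hh⟩, hgh⟩ : ∃ g h : H 0, ⁅g, h⁆ ≠ 1 := by
    by_contra! hall
    exact h0 (eq_bot_iff.mpr (commutator_le.mpr fun g _ h _ => mem_bot.mpr (hall g h)))
  replace hgh : ⁅g, h⁆ ≠ 1 := fun e => hgh (Subtype.ext e)
  have hα {i : Fin m} {x : G} (hx : x ∈ H i) : α x ∈ H (i + 1) :=
    hperm i ▸ mem_map_of_mem _ hx
  have hcomm {i j : Fin m} (hij : i ≠ j) {x y : G} (hx : x ∈ H i) (hy : y ∈ H j) :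
      ⁅x, y⁆ = 1 :=
    (hG.commute i j hij x hx y hy).commutator_eq
  suffices ∃ a b : G, ⁅a⁻¹ * α a, b⁻¹ * α b⁆ ≠ 1 by
    obtain ⟨a, b, hab⟩ := this
    exact fun hbot => hab (mem_bot.mp (hbot ▸ commutator_mem_commutator
      (subset_closure ⟨a, rfl⟩) (subset_closure ⟨b, rfl⟩)))
  rcases hm.eq_or_lt with rfl | hm
  · refine ⟨g, h, ?_⟩
    have h01 : (0 : Fin 2) ≠ 0 + 1 := by simp
    rw [commutatorElement_inv_mul_apply hc hfix, hcomm h01 hg (hα hh),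
      hcomm h01.symm (hα hg) hh, inv_one, mul_one, one_mul, ← pow_two]
    exact fun h2 => hgh ((pow_eq_one_iff_of_coprime hcop.symm).mp ⟨h2, pow_card_eq_one'⟩)
  · obtain ⟨n, rfl⟩ : ∃ n, m = n + 3 := ⟨m - 3, by omega⟩
    refine ⟨g, α h, ?_⟩
    have h01 : (0 : Fin (n + 3)) ≠ 0 + 1 := by simp
    have h02 : (0 : Fin (n + 3)) ≠ 0 + 1 + 1 := by
      simp [Fin.ext_iff, Fin.val_add, Nat.mod_eq_of_lt (show 2 < n + 3 by omega)]
    have h12 : (0 + 1 : Fin (n + 3)) ≠ 0 + 1 + 1 := by simp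
    rw [commutatorElement_inv_mul_apply hc hfix, hcomm h01 hg (hα hh),
      hcomm h02 hg (hα (hα hh)), ← map_commutatorElement,
      hfix _ (commutator_mem_commutator (mem_top g) (mem_top h))]
    simpa only [inv_one, mul_one, one_mul, ne_eq, inv_eq_one] using hgh

open MulAut in
theorem IsCentralProduct.index_commutatorSubgroup {G : Type*} [Group G] [Finite G] {m : ℕ}
    [NeZero m] {H : Fin m → Subgroup G} (hG : IsCentralProduct H)
    (hH : ∀ i, commutator (H i) = center (H i)) {α : MulAut G}
    (hperm : ∀ i, (H i).map α.toMonoidHom = H (i + 1)) (hα : α ^ m = 1)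
    (hcop : (Nat.card G).Coprime m) (hle : commutator G ≤ α.commutatorSubgroup) :
    α.commutatorSubgroup.index = Nat.card ((H 0).map Abelianization.of) := by
  rw [MulAut.index_commutatorSubgroup hle]
  refine card_ker_commutatorMap (abelianization_pow_eq_one α hα)
    (hcop.coprime_dvd_left (card_dvd_of_surjective _ Abelianization.of_surjective))
    (fun i => ?_) ?_ (hG.iSupIndep_map_abelianization_of hH)
  · rw [map_map, ← hperm, map_map]
    rfl
  · rw [← Subgroup.map_iSup, hG.iSup_eq_top,
      map_top_of_surjective _ Abelianization.of_surjective]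

theorem stmt_10_general {G : Type*} [Group G] [Finite G] (p m : ℕ) (hp : p.Prime)
    (hm : 2 ≤ m) [NeZero m]
    (Gsub : Fin m → Subgroup G)
    (hextra : ∀ i : Fin m, IsExtraspecial p (Gsub i))
    (hcard : ∀ i : Fin m, Nat.card (Gsub i) = p ^ 3)
    (hsup : ⨆ i, Gsub i = ⊤)
    (hcomm : ∀ i j : Fin m, i ≠ j → ∀ x ∈ Gsub i, ∀ y ∈ Gsub j, Commute x y)
    (hcent : ∀ i j : Fin m, i ≠ j →
      Gsub i ⊓ Gsub j = Gsub i ⊓ Subgroup.centralizer (Gsub i : Set G))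
    (α : MulAut G) (hord : orderOf α = m)
    (hcop : Nat.Coprime m (Nat.card G))
    (hperm : ∀ i : Fin m, (Gsub i).map α.toMonoidHom = Gsub (i + 1))
    (hfix : ∀ x ∈ commutator G, α x = x) :
    IsExtraspecial p (Subgroup.closure {y : G | ∃ g : G, y = g⁻¹ * α g}) ∧
      (Subgroup.closure {y : G | ∃ g : G, y = g⁻¹ * α g}).index = p ^ 2 := by
  have hG : IsCentralProduct Gsub := ⟨hsup, hcomm, hcent⟩
  have hH i : commutator (Gsub i) = center (Gsub i) := (hextra i).2.1
  have hZ := hG.commutator_eq hH 0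
  have hc (x y : G) : ⁅x, y⁆ ∈ center G :=
    hG.inf_centralizer_le_center 0 (hZ ▸ commutator_mem_commutator (mem_top x) (mem_top y))
  have hcardZ : Nat.card (commutator G) = p := by
    rw [hZ, ← map_subtype_center, card_map_of_injective (subtype_injective _), (hextra 0).2.2]
  have hα : α ^ m = 1 := hord ▸ pow_orderOf_eq_one α
  have hle : commutator G ≤ ⁅α.commutatorSubgroup, α.commutatorSubgroup⁆ := by
    have h0 : commutator (Gsub 0) ≠ ⊥ := fun hbot =>
      hp.one_lt.ne (by rw [← (hextra 0).2.2, ← hH 0, hbot, card_bot])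
    obtain ⟨x, hx, hx1⟩ := (bot_or_exists_ne_one _).resolve_left
      (hG.commutator_commutatorSubgroup_ne_bot hm hperm hc hfix hcop.symm h0)
    exact le_of_mem_of_card_prime (hcardZ ▸ hp) (commutator_mono le_top le_top hx) hx hx1
  have hV0 : Nat.card ((Gsub 0).map Abelianization.of) = p ^ 2 := by
    have h := card_map_mul_card_ker (Abelianization.ker_of G ▸ hZ ▸ inf_le_left : _ ≤ Gsub 0)
    rw [Abelianization.ker_of, hcardZ, hcard] at h
    exact Nat.eq_of_mul_eq_mul_right hp.pos (by rw [h]; ring)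
  have hpG : IsPGroup p G :=
    .of_iSup_eq_top_of_isPGroup_commutator (fun i => (hextra i).1) hsup
      (.of_card (n := 1) (by rw [hcardZ, pow_one]))
  refine ⟨α.isExtraspecial_commutatorSubgroup hc (hZ ▸ hG.center_le_inf_centralizer 0) hfix hα
    hcop.symm hpG hcardZ hle, ?_⟩
  rw [← hV0]
  exact hG.index_commutatorSubgroup hH hperm hα hcop.symm (hle.trans (commutator_le_self _))

/-- Let `m ≥ 2` and let `G = G₀ ∘ G₁ ∘ ⋯ ∘ G_{m-1}` be a finite group which is a
central product of isomorphic extra-special subgroups of order `p³`. If `G` admits a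
coprime automorphism `α` of order `m` cyclically permuting the factors with
`G' ≤ C_G(α)`, then `[G,α]` is extra-special of index `p²` in `G`. -/
theorem stmt_10 {G : Type*} [Group G] [Finite G] (p m : ℕ) (hp : p.Prime)
    (hm : 2 ≤ m) [NeZero m]
    (Gsub : Fin m → Subgroup G)
    (hextra : ∀ i : Fin m, IsExtraspecial p (Gsub i))
    (hcard : ∀ i : Fin m, Nat.card (Gsub i) = p ^ 3)
    (hiso : ∀ i : Fin m, Nonempty ((Gsub i) ≃* (Gsub 0)))
    (hsup : ⨆ i, Gsub i = ⊤)
    (hcomm : ∀ i j : Fin m, i ≠ j → ∀ x ∈ Gsub i, ∀ y ∈ Gsub j, Commute x y)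
    (hcent : ∀ i j : Fin m, i ≠ j →
      Gsub i ⊓ Gsub j = Gsub i ⊓ Subgroup.centralizer (Gsub i : Set G))
    (α : MulAut G) (hord : orderOf α = m)
    (hcop : Nat.Coprime m (Nat.card G))
    (hperm : ∀ i : Fin m, (Gsub i).map α.toMonoidHom = Gsub (i + 1))
    (hfix : ∀ x ∈ commutator G, α x = x) :
    IsExtraspecial p (Subgroup.closure {y : G | ∃ g : G, y = g⁻¹ * α g}) ∧
      (Subgroup.closure {y : G | ∃ g : G, y = g⁻¹ * α g}).index = p ^ 2 :=
  stmt_10_general p m hp hm Gsub hextra hcard hsup hcomm hcent α hord hcop hperm hfix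
end

section
/- Under the hypotheses of the previous statement (G a central product of m ≥ 2 isomorphic extra-special groups of order p³, α a coprime automorphism of order m cyclically permuting the factors with G' ≤ C_G(α)), the fixed-point subgroup C_{[G,α]}(α) equals G' and has order p. -/
/-!
Put `Z = G₀'`. In each factor `Gᵢ' = Z(Gᵢ) = Gᵢ ∩ C_G(Gᵢ)`, and the central product condition
identifies this with `Gᵢ ∩ G₀ = Z`; so `Z` is central and `G/Z` is generated by the pairwise
commuting abelian images of the factors, whence `G' = Z`, of order `p`.

Since `α` maps `G₀` into `G₁`, which centralizes `G₀`, for `x, y ∈ G₀` the commutator `[x, y]`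
equals `[x, y α(y)⁻¹] ∈ [G, α]`; thus `G' ≤ [G, α]`. Conversely the norm `∏_{i<m} α^i` on the
abelianization kills `[G, α]` and is the `m`-th power on `α`-fixed elements, so by coprimality
an `α`-fixed element of `[G, α]` lies in `G'`.
-/

open Subgroup
open scoped commutatorElement

section AutCommutator

variable {G : Type*} [Group G]

def autCommutator (α : MulAut G) : Subgroup G :=
  closure {y : G | ∃ g : G, y = g⁻¹ * α g}

instance autCommutator_normal (α : MulAut G) : (autCommutator α).Normal where
  conj_mem n hn h := by
    have hmap : (autCommutator α).map (MulAut.conj h).toMonoidHom ≤ autCommutator α := by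
      rw [autCommutator, MonoidHom.map_closure, closure_le]
      rintro _ ⟨_, ⟨g, rfl⟩, rfl⟩
      have hconj : h * (g⁻¹ * α g) * h⁻¹
          = (g * h⁻¹)⁻¹ * α (g * h⁻¹) * ((h⁻¹)⁻¹ * α h⁻¹)⁻¹ := by
        simp only [map_mul, map_inv]
        group
      show h * (g⁻¹ * α g) * h⁻¹ ∈ autCommutator α
      rw [hconj]
      exact mul_mem (subset_closure ⟨_, rfl⟩) (inv_mem (subset_closure ⟨_, rfl⟩))
    exact hmap ⟨n, hn, rfl⟩

theorem commutatorElement_mem_autCommutator (α : MulAut G) {x y : G}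
    (h : Commute x (α y)) : ⁅x, y⁆ ∈ autCommutator α := by
  have ht : y * (α y)⁻¹ ∈ autCommutator α := subset_closure ⟨y⁻¹, by simp⟩
  have hxt : ⁅x, y * (α y)⁻¹⁆ ∈ autCommutator α :=
    mul_mem ((autCommutator_normal α).conj_mem _ ht x) (inv_mem ht)
  have hxy : ⁅x, y⁆ = ⁅x, y * (α y)⁻¹⁆ := calc
    ⁅x, y⁆ = x * y * ((α y)⁻¹ * x⁻¹ * α y) * y⁻¹ := by
        rw [h.inv_left.symm.inv_mul_cancel, commutatorElement_def, mul_assoc]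
    _ = ⁅x, y * (α y)⁻¹⁆ := by rw [commutatorElement_def]; group
  exact hxy ▸ hxt

end AutCommutator

section AutNorm

variable {G A : Type*} [Group G] [CommGroup A]

def autNorm (α : MulAut G) (m : ℕ) (f : G →* A) : G →* A where
  toFun g := ∏ i ∈ Finset.range m, f ((α ^ i) g)
  map_one' := by simp
  map_mul' x y := by simp [Finset.prod_mul_distrib]

variable {α : MulAut G} {m : ℕ}

theorem autNorm_apply_apply (hα : α ^ m = 1) (f : G →* A) (g : G) :
    autNorm α m f (α g) = autNorm α m f g := by
  have hshift := (Finset.prod_range_succ' (fun i => f ((α ^ i) g)) m).symm.trans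
    (Finset.prod_range_succ (fun i => f ((α ^ i) g)) m)
  simp only [hα, pow_zero] at hshift
  simpa [autNorm, pow_succ, MulAut.mul_apply] using hshift

theorem autCommutator_le_ker_autNorm (hα : α ^ m = 1) (f : G →* A) :
    autCommutator α ≤ (autNorm α m f).ker := by
  rw [autCommutator, closure_le]
  rintro _ ⟨g, rfl⟩
  simp [autNorm_apply_apply hα]

theorem autNorm_apply_of_apply_eq (f : G →* A) {u : G} (hu : α u = u) :
    autNorm α m f u = f u ^ m := by
  have hpow : ∀ i : ℕ, (α ^ i) u = u := fun i => by
    induction i with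
    | zero => rfl
    | succ i ih => rw [pow_succ, MulAut.mul_apply, hu, ih]
  simp [autNorm, hpow]

theorem mem_commutator_of_mem_autCommutator_of_apply_eq (hα : α ^ m = 1)
    (hcop : m.Coprime (Nat.card G)) {u : G} (hu : u ∈ autCommutator α) (hfix : α u = u) :
    u ∈ commutator G := by
  have hpow : Abelianization.of u ^ m = 1 := by
    rw [← autNorm_apply_of_apply_eq Abelianization.of hfix]
    exact autCommutator_le_ker_autNorm hα _ hu
  have hord : orderOf (Abelianization.of u) = 1 :=
    Nat.eq_one_of_dvd_coprimes hcop (orderOf_dvd_of_pow_eq_one hpow)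
      ((orderOf_map_dvd _ u).trans (orderOf_dvd_natCard u))
  rw [← Abelianization.ker_of, MonoidHom.mem_ker, ← orderOf_eq_one_iff, hord]

end AutNorm

section CentralProduct

variable {G : Type*} [Group G]

theorem Subgroup.map_subtype_center_s11 (H : Subgroup G) :
    (center H).map H.subtype = H ⊓ centralizer H := by
  ext x
  simp only [mem_map, mem_inf, mem_centralizer_iff, mem_center_iff, Subtype.forall,
    coe_subtype]
  constructor
  · rintro ⟨⟨x, hx⟩, hc, rfl⟩
    exact ⟨hx, fun g hg => congrArg Subtype.val (hc g hg)⟩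
  · rintro ⟨hx, hc⟩
    exact ⟨⟨x, hx⟩, fun g hg => Subtype.ext (hc g hg), rfl⟩

theorem le_center_of_iSup_eq_top {ι : Type*} {H : ι → Subgroup G} (hH : ⨆ i, H i = ⊤)
    {K : Subgroup G} (hK : ∀ i, K ≤ centralizer (H i)) : K ≤ center G := by
  rw [← centralizer_univ, ← coe_top, le_centralizer_iff, ← hH, iSup_le_iff]
  exact fun i => (le_centralizer_iff).mp (hK i)

theorem commutator_le_of_iSup_eq_top {ι : Type*} {H : ι → Subgroup G} (hH : ⨆ i, H i = ⊤)
    {N : Subgroup G} [N.Normal] (hN : ∀ i j, ⁅H i, H j⁆ ≤ N) : commutator G ≤ N := by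
  let π := QuotientGroup.mk' N
  have hπ : ∀ K : Subgroup G, K ≤ N ↔ K.map π = ⊥ := fun K => by
    rw [Subgroup.map_eq_bot_iff, QuotientGroup.ker_mk']
  rw [hπ, _root_.commutator_def, map_commutator, ← hH, Subgroup.map_iSup,
    commutator_eq_bot_iff_le_centralizer, iSup_le_iff]
  intro i
  rw [le_centralizer_iff, iSup_le_iff]
  intro j
  rw [← commutator_eq_bot_iff_le_centralizer, ← map_commutator, ← hπ]
  exact hN j i

theorem commutator_eq_of_iSup_eq_top {ι : Type*} {H : ι → Subgroup G} (i₀ : ι)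
    (hder : ∀ i, commutator (H i) = center (H i)) (hsup : ⨆ i, H i = ⊤)
    (hcomm : ∀ i j, i ≠ j → ∀ x ∈ H i, ∀ y ∈ H j, Commute x y)
    (hcent : ∀ i j, i ≠ j → H i ⊓ H j = H i ⊓ centralizer (H i)) :
    commutator G = ⁅H i₀, H i₀⁆ := by
  have hcenter : ∀ i, ⁅H i, H i⁆ = H i ⊓ centralizer (H i) := fun i => by
    rw [← map_subtype_commutator, hder, map_subtype_center_s11]
  have hcomm_eq : ∀ i, ⁅H i, H i⁆ = ⁅H i₀, H i₀⁆ := fun i => by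
    rcases eq_or_ne i i₀ with rfl | hi
    · rfl
    · rw [hcenter, hcenter, ← hcent i i₀ hi, ← hcent i₀ i hi.symm, inf_comm]
  have hZcenter : ⁅H i₀, H i₀⁆ ≤ center G :=
    le_center_of_iSup_eq_top hsup fun i => hcomm_eq i ▸ hcenter i ▸ inf_le_right
  have hnormal : (⁅H i₀, H i₀⁆).Normal :=
    ⟨fun n hn g => by rwa [(mem_center_iff.mp (hZcenter hn) g), mul_inv_cancel_right]⟩
  refine le_antisymm (commutator_le_of_iSup_eq_top hsup fun i j => ?_)
    (commutator_mono le_top le_top)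
  rcases eq_or_ne i j with rfl | hij
  · exact (hcomm_eq i).le
  · have : ⁅H i, H j⁆ = ⊥ := commutator_eq_bot_iff_le_centralizer.mpr fun x hx =>
      mem_centralizer_iff.mpr fun y hy => (hcomm i j hij x hx y hy).symm
    exact this.le.trans bot_le

end CentralProduct

theorem stmt_11_general {G : Type*} [Group G] (p m : ℕ)
    (hm : 2 ≤ m) [NeZero m]
    (Gsub : Fin m → Subgroup G)
    (hextra : ∀ i : Fin m, IsExtraspecial p (Gsub i))
    (hsup : ⨆ i, Gsub i = ⊤)
    (hcomm : ∀ i j : Fin m, i ≠ j → ∀ x ∈ Gsub i, ∀ y ∈ Gsub j, Commute x y)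
    (hcent : ∀ i j : Fin m, i ≠ j →
      Gsub i ⊓ Gsub j = Gsub i ⊓ Subgroup.centralizer (Gsub i : Set G))
    (α : MulAut G) (hord : orderOf α = m)
    (hcop : Nat.Coprime m (Nat.card G))
    (hperm : ∀ i : Fin m, (Gsub i).map α.toMonoidHom = Gsub (i + 1))
    (hfix : ∀ x ∈ commutator G, α x = x) :
    {x : G | x ∈ Subgroup.closure {y : G | ∃ g : G, y = g⁻¹ * α g} ∧ α x = x}
        = (commutator G : Set G) ∧
      Nat.card (commutator G) = p := by
  have hG' : commutator G = ⁅Gsub 0, Gsub 0⁆ :=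
    commutator_eq_of_iSup_eq_top 0 (fun i => (hextra i).2.1) hsup hcomm hcent
  have h01 : (0 : Fin m) ≠ 1 := by
    simp [Fin.ext_iff, Nat.mod_eq_of_lt hm]
  have hG'_le : commutator G ≤ autCommutator α := hG' ▸ commutator_le.mpr fun x hx y hy =>
    commutatorElement_mem_autCommutator α <| hcomm 0 1 h01 x hx (α y) <| by
      rw [← zero_add (1 : Fin m), ← hperm 0]; exact ⟨y, hy, rfl⟩
  refine ⟨Set.ext fun x => ⟨fun ⟨hx, hαx⟩ => ?_, fun hx => ⟨hG'_le hx, hfix x hx⟩⟩, ?_⟩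
  · exact mem_commutator_of_mem_autCommutator_of_apply_eq (hord ▸ pow_orderOf_eq_one α) hcop
      hx hαx
  · rw [hG', ← map_subtype_commutator, card_map_of_injective (Gsub 0).subtype_injective,
      (hextra 0).2.1, (hextra 0).2.2]

/-- Under the hypotheses of the central product theorem (`G` a central product of
`m ≥ 2` isomorphic extra-special groups of order `p³`, `α` a coprime automorphism of
order `m` cyclically permuting the factors with `G' ≤ C_G(α)`), the fixed-point
subgroup `C_{[G,α]}(α)` equals `G'` and has order `p`. -/
theorem stmt_11 {G : Type*} [Group G] [Finite G] (p m : ℕ) (hp : p.Prime)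
    (hm : 2 ≤ m) [NeZero m]
    (Gsub : Fin m → Subgroup G)
    (hextra : ∀ i : Fin m, IsExtraspecial p (Gsub i))
    (hcard : ∀ i : Fin m, Nat.card (Gsub i) = p ^ 3)
    (hiso : ∀ i : Fin m, Nonempty ((Gsub i) ≃* (Gsub 0)))
    (hsup : ⨆ i, Gsub i = ⊤)
    (hcomm : ∀ i j : Fin m, i ≠ j → ∀ x ∈ Gsub i, ∀ y ∈ Gsub j, Commute x y)
    (hcent : ∀ i j : Fin m, i ≠ j →
      Gsub i ⊓ Gsub j = Gsub i ⊓ Subgroup.centralizer (Gsub i : Set G))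
    (α : MulAut G) (hord : orderOf α = m)
    (hcop : Nat.Coprime m (Nat.card G))
    (hperm : ∀ i : Fin m, (Gsub i).map α.toMonoidHom = Gsub (i + 1))
    (hfix : ∀ x ∈ commutator G, α x = x) :
    {x : G | x ∈ Subgroup.closure {y : G | ∃ g : G, y = g⁻¹ * α g} ∧ α x = x}
        = (commutator G : Set G) ∧
      Nat.card (commutator G) = p :=
  stmt_11_general p m hm Gsub hextra hsup hcomm hcent α hord hcop hperm hfix
end
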